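/- Let G = G₁ * G₂ be a free product of groups and let c, α ∈ G with c⁻¹αc = α (c centralizes α). If α is not conjugate into either factor G₁ or G₂, then there exists h ∈ G and integers m, n with α = hᵐ and c = hⁿ. -/

import Mathlib

/-!
Conjugating `α`, we may assume that its normal form `W` is cyclically reduced: nonempty, with
first and last letters in different factors. Indeed, a conjugate of minimal normal-form length
has this property unless it lies in a factor, since otherwise conjugating by its first letter
would shorten it. Then the normal form of `W ^ n` is `W` repeated `n` times, i.e. the initial
segment of length `n * |W|` of the bi-infinite periodic word `f = … W W W …`.

If `c` commutes with `W`, compare the normal forms of `c * W ^ n` and `W ^ n * c` for large `n`: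
multiplying by `c` on the left only rewrites a prefix of bounded length, and on the right a suffix.
So the normal form of `c * W ^ n` agrees with both `f` and a shift of `f` by some `s` on a window
longer than `|W|`. Hence `s` is a period of `f` and `c * W ^ n` is the initial segment of `f` of
length `n * |W| + s`. Then `d = gcd(|W|, s)` is also a period, so `W` and `c * W ^ n`, and hence
`c`, are powers of the product `h` of the first `d` letters of `f`.
-/

open Monoid Function

namespace Function.Periodic

variable {α : Type*} {f : ℤ → α}

theorem periodic_of_forall_lt {N : ℕ} (hf : Periodic f N) (hN : 0 < N) {a s : ℤ}
    (h : ∀ i : ℕ, i < N → f (a + i + s) = f (a + i)) : Periodic f s := by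
  intro t
  obtain ⟨i, hi, hti⟩ : ∃ i : ℕ, i < N ∧ (a + i : ℤ) = t - (t - a) / N * N :=
    ⟨((t - a) % N).toNat, by have := Int.emod_lt_of_pos (t - a) (by omega : (0 : ℤ) < N); omega,
      by have := Int.emod_nonneg (t - a) (by omega : (N : ℤ) ≠ 0)
         have := Int.emod_def (t - a) N; rw [mul_comm] at this; omega⟩
  rw [← hf.sub_int_mul_eq ((t - a) / N), ← hf.sub_int_mul_eq ((t - a) / N) (x := t),
    Int.cast_id, ← hti, add_sub_right_comm, ← hti, h i hi]

theorem int_gcd {p q : ℤ} (hp : Periodic f p) (hq : Periodic f q) :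
    Periodic f (Int.gcd p q) := by
  rw [Int.gcd_eq_gcd_ab, mul_comm p, mul_comm q]
  simpa using (hp.int_mul (p.gcdA q)).add_period (hq.int_mul (p.gcdB q))

theorem eq_ofFn_of_append_drop_eq_take_append {N : ℕ} (hf : Periodic f N) (hN : 0 < N)
    {k m j j' : ℕ} {Z l r : List α} (hm : 2 * k + N ≤ m) (hj : j ≤ k) (hl : l.length ≤ k)
    (hj' : j' ≤ k) (hleft : Z = l ++ (List.ofFn fun t : Fin m => f t).drop j)
    (hright : Z = (List.ofFn fun t : Fin m => f t).take (m - j') ++ r) :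
    Periodic f (Z.length - m) ∧ Z = List.ofFn fun t : Fin Z.length => f t := by
  have hlen : Z.length = l.length + (m - j) := by simp [hleft]
  have hlen' : m - j' ≤ Z.length := by simp [hright]
  have hZ_left (t : ℕ) (ht : t < Z.length) (hlt : l.length ≤ t) :
      Z[t] = f (t - l.length + j) := by
    simp only [hleft, List.getElem_append_right hlt, List.getElem_drop, List.getElem_ofFn]
    congr 1; omega
  have hZ_right (t : ℕ) (ht : t < m - j') : Z[t] = f t := by
    simp only [hright]
    rw [List.getElem_append_left (by simp; omega)]
    simp
  have hper : Periodic f (Z.length - m) := by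
    refine hf.periodic_of_forall_lt hN (a := j) fun i hi => ?_
    have h := hZ_left (l.length + i) (by omega) (by omega)
    rw [hZ_right _ (by omega)] at h
    rw [show (j : ℤ) + i + (Z.length - m) = ((l.length + i : ℕ) : ℤ) by push_cast; omega, h]
    congr 1; push_cast; omega
  refine ⟨hper, List.ext_getElem (by simp) fun t ht _ => ?_⟩
  rw [List.getElem_ofFn]
  rcases Nat.lt_or_ge t (m - j') with htm | htm
  · exact hZ_right t htm
  · rw [hZ_left t ht (by omega), show (t : ℤ) - l.length + j = t - (Z.length - m) by omega,
      hper.sub_eq]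

end Function.Periodic

namespace List

variable {α : Type*}

def periodicSeq (L : List α) (hL : L ≠ []) (t : ℤ) : α :=
  L[(t % L.length).toNat]'(by
    have hN : (0 : ℤ) < L.length := by simpa [List.length_pos_iff] using hL
    have := Int.emod_nonneg t hN.ne'
    have := Int.emod_lt_of_pos t hN
    omega)

variable (L : List α) (hL : L ≠ [])

theorem periodicSeq_periodic : Periodic (L.periodicSeq hL) L.length := by
  intro t
  simp [periodicSeq]

theorem periodicSeq_natCast {t : ℕ} (ht : t < L.length) : L.periodicSeq hL t = L[t] := by
  simp [periodicSeq, Int.emod_eq_of_lt (Int.natCast_nonneg t) (Int.ofNat_lt.2 ht)]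

theorem periodicSeq_mem (t : ℤ) : L.periodicSeq hL t ∈ L := getElem_mem _

variable {L} in
theorem IsChain.periodicSeq {R : α → α → Prop} (hR : L.IsChain R)
    (hwrap : R (L.getLast hL) (L.head hL)) (t : ℤ) :
    R (L.periodicSeq hL t) (L.periodicSeq hL (t + 1)) := by
  have hN : (0 : ℤ) < L.length := by simpa [List.length_pos_iff] using hL
  obtain ⟨r, hr, hrt⟩ : ∃ r : ℕ, r < L.length ∧ (r : ℤ) = t - L.length * (t / L.length) :=
    ⟨(t % L.length).toNat, by have := Int.emod_lt_of_pos t hN; omega,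
      by have := Int.emod_nonneg t hN.ne'; have := Int.emod_def t L.length; omega⟩
  have hper := periodicSeq_periodic L hL
  have hshift (u : ℤ) : L.periodicSeq hL (t + u) = L.periodicSeq hL (r + u) := by
    rw [← hper.sub_int_mul_eq (t / L.length), Int.cast_id, hrt]; ring_nf
  have h0 := hshift 0
  rw [add_zero, add_zero] at h0
  rw [h0, hshift, periodicSeq_natCast L hL hr]
  rcases Nat.lt_or_ge (r + 1) L.length with hr1 | hr1
  · rw [show (r : ℤ) + 1 = ((r + 1 : ℕ) : ℤ) by push_cast; ring, periodicSeq_natCast L hL hr1]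
    exact List.isChain_iff_getElem.1 hR r hr1
  · have hrN : r + 1 = L.length := by omega
    rw [show (r : ℤ) + 1 = ((0 : ℕ) : ℤ) + L.length by omega, hper,
      periodicSeq_natCast L hL (by omega)]
    simpa [List.getLast_eq_getElem, List.head_eq_getElem, ← hrN] using hwrap

end List

namespace Monoid.CoprodI

variable {ι : Type*} {M : ι → Type*} [∀ i, Monoid (M i)] {G : ι → Type*} [∀ i, Group (G i)]

namespace Word

section OfSeq

variable (f : ℤ → Σ i, M i) (hf_ne_one : ∀ t, (f t).2 ≠ 1)
  (hf_chain : ∀ t, (f t).1 ≠ (f (t + 1)).1)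

def ofSeq (n : ℕ) : Word M where
  toList := List.ofFn fun t : Fin n => f t
  ne_one := by
    simp only [List.mem_ofFn', Set.mem_range, forall_exists_index]
    rintro _ t rfl
    exact hf_ne_one _
  chain_ne := by
    refine List.isChain_iff_getElem.2 fun t ht => ?_
    simpa using hf_chain t

theorem prod_ofSeq (n : ℕ) :
    (ofSeq f hf_ne_one hf_chain n).prod = (List.ofFn fun t : Fin n => of (f t).2).prod := by
  simp [ofSeq, prod, List.map_ofFn, Function.comp_def]

theorem prod_ofSeq_add {a : ℕ} (ha : Periodic f a) (b : ℕ) :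
    (ofSeq f hf_ne_one hf_chain (a + b)).prod =
      (ofSeq f hf_ne_one hf_chain a).prod * (ofSeq f hf_ne_one hf_chain b).prod := by
  simp only [prod_ofSeq, List.ofFn_add, List.prod_append, Fin.val_natAdd]
  congr 3 with t
  exact congrArg (fun x : Σ i, M i => of x.2) (by rw [Nat.cast_add, add_comm, ha])

theorem prod_ofSeq_mul {d : ℕ} (hd : Periodic f d) (k : ℕ) :
    (ofSeq f hf_ne_one hf_chain (k * d)).prod = (ofSeq f hf_ne_one hf_chain d).prod ^ k := by
  induction k with
  | zero => simp [prod_ofSeq]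
  | succ k ih => rw [add_one_mul, add_comm, prod_ofSeq_add _ _ _ hd, ih, pow_succ']

end OfSeq

def inv (w : Word G) : Word G where
  toList := (w.toList.map fun l => ⟨l.1, l.2⁻¹⟩).reverse
  ne_one := by
    simp only [List.mem_reverse, List.mem_map]
    rintro _ ⟨l, hl, rfl⟩
    simpa using w.ne_one l hl
  chain_ne := by
    rw [List.isChain_reverse, List.isChain_map]
    exact w.chain_ne.imp fun _ _ h => h.symm

theorem toList_inv (w : Word G) :
    w.inv.toList = (w.toList.map fun l => ⟨l.1, l.2⁻¹⟩).reverse := rfl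

@[simp]
theorem inv_inv (w : Word G) : w.inv.inv = w := by
  ext1
  simp [toList_inv, Function.comp_def]

@[simp]
theorem length_inv (w : Word G) : w.inv.toList.length = w.toList.length := by
  simp [toList_inv]

@[simp]
theorem prod_inv (w : Word G) : w.inv.prod = w.prod⁻¹ := by
  simp [prod, toList_inv, List.prod_inv_reverse, Function.comp_def]

section Action

variable [∀ i, DecidableEq (M i)]

theorem exists_toList_rcons {i : ι} (p : Pair M i) :
    ∃ l : List (Σ i, M i), l.length ≤ 1 ∧ (rcons p).toList = l ++ p.tail.toList := by
  unfold rcons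
  split
  · exact ⟨[], by simp, rfl⟩
  · exact ⟨[⟨i, p.head⟩], by simp, rfl⟩

variable [DecidableEq ι]

theorem toList_eq_cons_equivPair {i : ι} {w : Word M} (h : w.fstIdx = some i) :
    w.toList = ⟨i, (equivPair i w).head⟩ :: (equivPair i w).tail.toList := by
  set p := equivPair i w
  have hw : rcons p = w := (equivPair i).symm_apply_apply w
  unfold rcons at hw
  split at hw
  · rw [← hw] at h
    exact absurd h p.fstIdx_ne
  · rw [← hw]; rfl

theorem exists_toList_equivPair_tail (i : ι) (w : Word M) :
    ∃ j ≤ 1, (equivPair i w).tail.toList = w.toList.drop j := by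
  by_cases h : w.fstIdx = some i
  · exact ⟨1, le_rfl, by rw [toList_eq_cons_equivPair h]; rfl⟩
  · exact ⟨0, zero_le_one, by rw [equivPair_eq_of_fstIdx_ne h]; rfl⟩

theorem exists_toList_of_smul {i : ι} (m : M i) (w : Word M) :
    ∃ j ≤ 1, ∃ l : List (Σ i, M i), l.length ≤ 1 ∧ (of m • w).toList = l ++ w.toList.drop j := by
  obtain ⟨l, hl, hrcons⟩ :=
    exists_toList_rcons { equivPair i w with head := m * (equivPair i w).head }
  obtain ⟨j, hj, htail⟩ := exists_toList_equivPair_tail i w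
  exact ⟨j, hj, l, hl, by rw [of_smul_def, hrcons, ← htail]⟩

theorem length_of_smul_le {i : ι} {w : Word M} (h : w.fstIdx = some i) (m : M i) :
    (of m • w).toList.length ≤ w.toList.length := by
  obtain ⟨l, hl, hrcons⟩ :=
    exists_toList_rcons { equivPair i w with head := m * (equivPair i w).head }
  rw [of_smul_def, hrcons, toList_eq_cons_equivPair h]
  simp only [List.length_append, List.length_cons]
  omega

theorem exists_toList_prod_smul (v w : Word M) :
    ∃ j ≤ v.toList.length, ∃ l : List (Σ i, M i),
      l.length ≤ v.toList.length ∧ (v.prod • w).toList = l ++ w.toList.drop j := by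
  induction v using consRecOn with
  | empty => exact ⟨0, le_rfl, [], le_rfl, by simp [prod_empty]⟩
  | cons i m v hv hm ih =>
    obtain ⟨j, hj, l, hl, hvw⟩ := ih
    obtain ⟨j₁, hj₁, l₁, hl₁, hmvw⟩ := exists_toList_of_smul m (v.prod • w)
    refine ⟨j + (j₁ - l.length), by simp; omega, l₁ ++ l.drop j₁, by simp; omega, ?_⟩
    rw [prod_cons, mul_smul, hmvw, hvw, List.drop_append, List.drop_drop, List.append_assoc,
      add_comm j]

@[simp]
theorem prod_equiv (g : CoprodI M) : (equiv g).prod = g := equiv.symm_apply_apply g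

@[simp]
theorem equiv_prod (w : Word M) : equiv w.prod = w := equiv.apply_symm_apply w

theorem equiv_mul (g h : CoprodI M) : equiv (g * h) = g • equiv h := by
  rw [← equiv_prod (g • equiv h), prod_smul, prod_equiv]

end Action

theorem equiv_inv [DecidableEq ι] [∀ i, DecidableEq (G i)] (g : CoprodI G) :
    equiv g⁻¹ = (equiv g).inv := by
  rw [← equiv_prod (equiv g).inv, prod_inv, prod_equiv]

end Word

variable [DecidableEq ι] [∀ i, DecidableEq (M i)] [∀ i, DecidableEq (G i)]

def wordLength (g : CoprodI M) : ℕ := (Word.equiv g).toList.length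

@[simp]
theorem wordLength_inv (g : CoprodI G) : wordLength g⁻¹ = wordLength g := by
  simp [wordLength, Word.equiv_inv]

theorem exists_toList_smul (g : CoprodI M) (w : Word M) :
    ∃ j ≤ wordLength g, ∃ l : List (Σ i, M i),
      l.length ≤ wordLength g ∧ (g • w).toList = l ++ w.toList.drop j := by
  simpa [wordLength] using Word.exists_toList_prod_smul (Word.equiv g) w

theorem exists_toList_equiv_prod_mul (w : Word G) (g : CoprodI G) :
    ∃ j ≤ wordLength g, ∃ r : List (Σ i, G i),
      (Word.equiv (w.prod * g)).toList = w.toList.take (w.toList.length - j) ++ r := by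
  obtain ⟨j, hj, l, -, hl⟩ := exists_toList_smul g⁻¹ w.inv
  have h : Word.equiv (w.prod * g) = (g⁻¹ • w.inv).inv := by
    rw [← Word.inv_inv (Word.equiv _), ← Word.equiv_inv, mul_inv_rev, Word.equiv_mul,
      ← Word.prod_inv, Word.equiv_prod]
  refine ⟨j, by simpa using hj, (l.map fun l => ⟨l.1, l.2⁻¹⟩).reverse, ?_⟩
  rw [h, Word.toList_inv, hl, Word.toList_inv]
  simp [List.drop_reverse, Function.comp_def]

theorem exists_wordLength_conj_lt {W : Word G} (hW : W.toList ≠ [])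
    (hends : (W.toList.getLast hW).1 = (W.toList.head hW).1) (hlen : 2 ≤ W.toList.length) :
    ∃ u, wordLength (u⁻¹ * W.prod * u) < W.toList.length := by
  set i := (W.toList.head hW).1
  have hfst : W.fstIdx = some i := by simp [Word.fstIdx, List.head?_eq_some_head hW, i]
  set p := Word.equivPair i W
  have hW_cons : W.toList = ⟨i, p.head⟩ :: p.tail.toList := Word.toList_eq_cons_equivPair hfst
  have hR : p.tail.prod = (of p.head)⁻¹ * W.prod := by
    rw [Word.equivPair_tail_eq_inv_smul, Word.prod_smul]
  have hR_fst : p.tail.inv.fstIdx = some i := by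
    have hne : p.tail.toList ≠ [] := by
      rintro h; rw [hW_cons, h] at hlen; simp at hlen
    have hlast : p.tail.toList.getLast hne = W.toList.getLast hW := by
      simp only [hW_cons, List.getLast_cons hne]
    simp [Word.fstIdx, Word.toList_inv, List.head?_reverse, List.getLast?_eq_some_getLast hne,
      hlast, hends]
  refine ⟨of p.head, ?_⟩
  rw [← hR, ← wordLength_inv, mul_inv_rev, ← Word.prod_inv, wordLength, Word.equiv_mul,
    Word.equiv_prod, ← map_inv]
  calc _ ≤ p.tail.inv.toList.length := Word.length_of_smul_le hR_fst _
    _ < W.toList.length := by rw [Word.length_inv, hW_cons, List.length_cons]; omega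

theorem exists_conj_eq_cyclicallyReduced_prod {g : CoprodI G} (hg1 : g ≠ 1)
    (hg : ∀ u i (x : G i), u⁻¹ * g * u ≠ of x) :
    ∃ u, ∃ (W : Word G) (hW : W.toList ≠ []),
      (W.toList.getLast hW).1 ≠ (W.toList.head hW).1 ∧ u⁻¹ * g * u = W.prod := by
  obtain ⟨u, -, hu⟩ := (InvImage.wf (fun u => wordLength (u⁻¹ * g * u)) wellFounded_lt).has_min
    Set.univ ⟨1, trivial⟩
  set W := Word.equiv (u⁻¹ * g * u)
  have hW : W.toList ≠ [] := fun h => hg1 <| by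
    have : u⁻¹ * g * u = 1 := by rw [← Word.prod_equiv (u⁻¹ * g * u)]; simp [Word.prod, W, h]
    calc g = u * (u⁻¹ * g * u) * u⁻¹ := by group
      _ = 1 := by rw [this]; group
  refine ⟨u, W, hW, fun hends => ?_, (Word.prod_equiv _).symm⟩
  rcases Nat.lt_or_ge W.toList.length 2 with hlen | hlen
  · obtain ⟨x, hx⟩ : ∃ x, W.toList = [x] :=
      List.length_eq_one_iff.1 (by have := List.length_pos_iff.2 hW; omega)
    exact hg u x.1 x.2 (by rw [← Word.prod_equiv (u⁻¹ * g * u)]; simp [Word.prod, W, hx])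
  · obtain ⟨v, hv⟩ := exists_wordLength_conj_lt hW hends hlen
    exact hu (u * v) trivial (by simpa [InvImage, W, wordLength, mul_assoc] using hv)

theorem Word.exists_mul_pow_eq_prod_ofSeq {f : ℤ → Σ i, G i} (hf_ne_one : ∀ t, (f t).2 ≠ 1)
    (hf_chain : ∀ t, (f t).1 ≠ (f (t + 1)).1) {N : ℕ} (hN : 0 < N) (hf : Periodic f N)
    {c : CoprodI G} (hc : Commute c (ofSeq f hf_ne_one hf_chain N).prod) :
    ∃ n L : ℕ, Periodic f (L - n * N) ∧
      c * (ofSeq f hf_ne_one hf_chain N).prod ^ n = (ofSeq f hf_ne_one hf_chain L).prod := by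
  set S := ofSeq f hf_ne_one hf_chain
  -- `c` rewrites at most `wordLength c` letters at either end of `S (n * N)`, so for this `n`
  -- the two normal forms of `c * S (n * N) = S (n * N) * c` overlap on a full period
  set n := 2 * wordLength c + 1 with hn
  have hpow : (S N).prod ^ n = (S (n * N)).prod := (prod_ofSeq_mul _ _ _ hf n).symm
  have hlen : (S (n * N)).toList.length = n * N := List.length_ofFn
  have hcomm : Commute c (S (n * N)).prod := hpow ▸ hc.pow_right n
  obtain ⟨j, hj, l, hl, hleft⟩ := exists_toList_smul c (S (n * N))
  obtain ⟨j', hj', r, hright⟩ := exists_toList_equiv_prod_mul (S (n * N)) c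
  rw [← Word.equiv_prod (S (n * N)), ← Word.equiv_mul, Word.equiv_prod] at hleft
  rw [← hcomm.eq, hlen] at hright
  obtain ⟨hper, hZ⟩ := hf.eq_ofFn_of_append_drop_eq_take_append (m := n * N) hN
    (by nlinarith [Nat.le_mul_of_pos_right (2 * wordLength c) hN]) hj hl hj' hleft hright
  set Z := equiv (c * (S (n * N)).prod)
  have hZS : Z = S Z.toList.length := Word.ext hZ
  refine ⟨n, Z.toList.length, hper, ?_⟩
  rw [hpow, ← hZS, Word.prod_equiv]

theorem Word.exists_zpow_eq_of_commute {W : Word G} (hW : W.toList ≠ [])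
    (hends : (W.toList.getLast hW).1 ≠ (W.toList.head hW).1) {c : CoprodI G}
    (hc : Commute c W.prod) : ∃ (h : CoprodI G) (a b : ℤ), W.prod = h ^ a ∧ c = h ^ b := by
  set N := W.toList.length
  set f := W.toList.periodicSeq hW
  have hN : 0 < N := List.length_pos_iff.2 hW
  have hf : Periodic f N := W.toList.periodicSeq_periodic hW
  have hf_ne_one (t : ℤ) : (f t).2 ≠ 1 := W.ne_one _ (W.toList.periodicSeq_mem hW t)
  have hf_chain : ∀ t, (f t).1 ≠ (f (t + 1)).1 := W.chain_ne.periodicSeq hW hends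
  set S := ofSeq f hf_ne_one hf_chain
  have hSN : S N = W := Word.ext <| List.ext_getElem List.length_ofFn fun t ht _ => by
    simpa [S, ofSeq, f] using W.toList.periodicSeq_natCast hW ‹_›
  rw [← hSN] at hc ⊢
  obtain ⟨n, L, hper, hL⟩ : ∃ n L : ℕ, Periodic f (L - n * N) ∧ c * (S N).prod ^ n = (S L).prod :=
    exists_mul_pow_eq_prod_ofSeq hf_ne_one hf_chain hN hf hc
  set d := Int.gcd N (L - n * N)
  have hd : Periodic f d := hf.int_gcd hper
  have hdN : d ∣ N := Int.ofNat_dvd.1 (Int.gcd_dvd_left _ _)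
  have hdL : d ∣ L := by
    have := dvd_add (Int.gcd_dvd_right (N : ℤ) (L - n * N))
      ((Int.gcd_dvd_left (N : ℤ) (L - n * N)).mul_left n)
    rw [sub_add_cancel] at this
    exact Int.ofNat_dvd.1 this
  have hS_pow {m : ℕ} (hm : d ∣ m) : (S m).prod = (S d).prod ^ (m / d) := by
    rw [← prod_ofSeq_mul _ _ _ hd, Nat.div_mul_cancel hm]
  refine ⟨(S d).prod, (N / d : ℕ), (L / d : ℕ) - n * (N / d : ℕ),
    by rw [zpow_natCast, ← hS_pow hdN], ?_⟩
  rw [zpow_sub, zpow_mul', zpow_natCast, zpow_natCast, zpow_natCast, ← hS_pow hdN, ← hS_pow hdL,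
    ← hL]
  group

theorem exists_zpow_eq_of_commute {c α : CoprodI G} (hc : Commute c α) (hα1 : α ≠ 1)
    (hα : ∀ u i (x : G i), u⁻¹ * α * u ≠ of x) :
    ∃ (h : CoprodI G) (a b : ℤ), α = h ^ a ∧ c = h ^ b := by
  obtain ⟨u, W, hW, hends, hu⟩ := exists_conj_eq_cyclicallyReduced_prod hα1 hα
  have hc' : Commute (u⁻¹ * c * u) W.prod := by
    simpa [← hu] using hc.map (MulAut.conj u⁻¹).toMonoidHom
  obtain ⟨h, a, b, ha, hb⟩ := W.exists_zpow_eq_of_commute hW hends hc'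
  refine ⟨u * h * u⁻¹, a, b, ?_, ?_⟩
  · rw [conj_zpow, ← ha, ← hu]; group
  · rw [conj_zpow, ← hb]; group

end Monoid.CoprodI

namespace Monoid.Coprod

variable {G₁ G₂ : Type*} [Group G₁] [Group G₂]

/-- Taking the factors as subgroups of `G₁ ∗ G₂` exhibits it as an indexed free product over
`Bool` without `ULift`, although `G₁` and `G₂` may live in different universes. -/
def factor (G₁ G₂ : Type*) [Group G₁] [Group G₂] (b : Bool) : Subgroup (G₁ ∗ G₂) :=
  cond b inl.range inr.range

def toCoprodI : G₁ ∗ G₂ →* CoprodI fun b => factor G₁ G₂ b :=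
  lift ((CoprodI.of (i := true)).comp (inl : G₁ →* G₁ ∗ G₂).rangeRestrict)
    ((CoprodI.of (i := false)).comp (inr : G₂ →* G₁ ∗ G₂).rangeRestrict)

def ofCoprodI : (CoprodI fun b => factor G₁ G₂ b) →* G₁ ∗ G₂ :=
  CoprodI.lift fun b => (factor G₁ G₂ b).subtype

@[simp]
theorem ofCoprodI_toCoprodI (g : G₁ ∗ G₂) : ofCoprodI (toCoprodI g) = g := by
  rw [← MonoidHom.comp_apply, show ofCoprodI.comp toCoprodI = MonoidHom.id (G₁ ∗ G₂) from
    hom_ext (by ext; rfl) (by ext; rfl), MonoidHom.id_apply]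

theorem toCoprodI_injective : Function.Injective (toCoprodI : G₁ ∗ G₂ →* _) :=
  Function.LeftInverse.injective ofCoprodI_toCoprodI

@[simp]
theorem ofCoprodI_of {b : Bool} (x : factor G₁ G₂ b) : ofCoprodI (CoprodI.of x) = x :=
  CoprodI.lift_of _ _

end Monoid.Coprod

/-- In a free product `G₁ * G₂`, if `c` centralizes `α` and `α` is not conjugate into either
factor, then `α` and `c` are powers of a common element. -/
theorem freeProduct_centralizer_cyclic {G₁ G₂ : Type*} [Group G₁] [Group G₂]
    (c α : Coprod G₁ G₂) (hc : c⁻¹ * α * c = α)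
    (h1 : ∀ g : Coprod G₁ G₂, ∀ x : G₁, g⁻¹ * α * g ≠ Coprod.inl x)
    (h2 : ∀ g : Coprod G₁ G₂, ∀ y : G₂, g⁻¹ * α * g ≠ Coprod.inr y) :
    ∃ (h : Coprod G₁ G₂) (m n : ℤ), α = h ^ m ∧ c = h ^ n := by
  classical
  have hcomm : Commute c α := by
    rw [commute_iff_eq]; nth_rewrite 1 [← hc]; group
  have hα1 : Coprod.toCoprodI α ≠ 1 :=
    (map_ne_one_iff _ Coprod.toCoprodI_injective).2 fun h => h1 1 1 (by simp [h])
  have hα : ∀ u b (x : Coprod.factor G₁ G₂ b),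
      u⁻¹ * Coprod.toCoprodI α * u ≠ CoprodI.of (M := fun b => Coprod.factor G₁ G₂ b) x := by
    rintro u (_ | _) ⟨_, y, rfl⟩ hx
    · exact h2 (Coprod.ofCoprodI u) y (by simpa using congrArg Coprod.ofCoprodI hx)
    · exact h1 (Coprod.ofCoprodI u) y (by simpa using congrArg Coprod.ofCoprodI hx)
  obtain ⟨h, m, n, hm, hn⟩ :=
    CoprodI.exists_zpow_eq_of_commute (hcomm.map Coprod.toCoprodI) hα1 hα
  exact ⟨Coprod.ofCoprodI h, m, n, by simpa using congrArg Coprod.ofCoprodI hm,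
    by simpa using congrArg Coprod.ofCoprodI hn⟩
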